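/- Let Ω ⊂ ℝ³ be a bounded open set and N ≥ 1. There exists a constant C > 0, depending only on N, such that for every continuously differentiable Ψ : ℝ³ → ℂᴺ with compact support contained in Ω: 0 ≤ ⟨V_H(Ψ)Ψ, Ψ⟩_{L²(Ω)} ≤ C ‖Ψ‖³_{L²} ‖∇Ψ‖_{L²}, where ⟨V_H(Ψ)Ψ, Ψ⟩_{L²(Ω)} := ∫_Ω V_H(Ψ)(x) ρ(Ψ)(x) dx and V_H(Ψ)(x) := ∫_{ℝ³} ρ(Ψ)(y)/‖x − y‖ dy. -/

import Mathlib

/-!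
Write `ρ = ‖Ψ‖²` and `V(x) = ∫ ρ(y) / ‖x - y‖ dy`. Split the Coulomb kernel at a radius `R`:
on the ball `B(x, R)` Hölder's inequality with exponents `3` and `3/2` gives at most
`κ R ‖Ψ‖₆²`, where `κ` is the `L^{3/2}` norm of `‖z‖⁻¹` on the unit ball (finite because
`3/2 < 3`, and the factor `R` comes from scaling), while outside the ball `‖x - y‖⁻¹ ≤ R⁻¹`
gives at most `‖Ψ‖₂² / R`. The choice `R = ‖Ψ‖₂ / ‖Ψ‖₆` yields `V ≤ (κ + 1) ‖Ψ‖₂ ‖Ψ‖₆`,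
hence `∫ V ρ ≤ (κ + 1) ‖Ψ‖₂³ ‖Ψ‖₆`, and the Gagliardo–Nirenberg–Sobolev inequality
`‖Ψ‖₆ ≤ C ‖∇Ψ‖₂` in dimension three concludes.
-/

open MeasureTheory Metric Set Module
open scoped ENNReal NNReal

namespace MeasureTheory.Measure

variable {E : Type*} [NormedAddCommGroup E] [NormedSpace ℝ E] [FiniteDimensional ℝ E]
  [MeasurableSpace E] [BorelSpace E] (μ : Measure E) [μ.IsAddHaarMeasure]

theorem lintegral_comp_smul (f : E → ℝ≥0∞) {R : ℝ} (hR : R ≠ 0) :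
    ∫⁻ x, f (R • x) ∂μ = ENNReal.ofReal |(R ^ finrank ℝ E)⁻¹| * ∫⁻ x, f x ∂μ := by
  rw [← smul_eq_mul, ← lintegral_smul_measure, ← map_addHaar_smul μ hR]
  exact (lintegral_map_equiv f
    (Homeomorph.smul (isUnit_iff_ne_zero.2 hR).unit).toMeasurableEquiv).symm

theorem setLIntegral_ball_enorm_rpow_neg {R : ℝ} (hR : 0 < R) (s : ℝ) :
    ∫⁻ z in ball 0 R, ‖z‖ₑ ^ (-s) ∂μ
      = ENNReal.ofReal (R ^ ((finrank ℝ E : ℝ) - s)) * ∫⁻ z in ball 0 1, ‖z‖ₑ ^ (-s) ∂μ := by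
  have hscale (z : E) : (ball (0 : E) R).indicator (‖·‖ₑ ^ (-s)) (R • z)
      = ENNReal.ofReal (R ^ (-s)) * (ball (0 : E) 1).indicator (‖·‖ₑ ^ (-s)) z := by
    have hmem : R • z ∈ ball (0 : E) R ↔ z ∈ ball (0 : E) 1 := by
      simp [norm_smul, abs_of_pos hR, hR]
    by_cases hz : z ∈ ball (0 : E) 1
    · rw [indicator_of_mem (hmem.2 hz), indicator_of_mem hz, enorm_smul,
        ENNReal.mul_rpow_of_ne_top enorm_ne_top enorm_ne_top, Real.enorm_of_nonneg hR.le,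
        ENNReal.ofReal_rpow_of_pos hR]
    · rw [indicator_of_notMem (mt hmem.1 hz), indicator_of_notMem hz, mul_zero]
  have h := lintegral_comp_smul μ ((ball (0 : E) R).indicator (‖·‖ₑ ^ (-s))) hR.ne'
  rw [lintegral_congr hscale, lintegral_const_mul' _ _ ENNReal.ofReal_ne_top,
    lintegral_indicator measurableSet_ball, lintegral_indicator measurableSet_ball,
    abs_of_pos (by positivity), ← Real.rpow_natCast, ← Real.rpow_neg hR.le] at h
  have hinv : ENNReal.ofReal (R ^ (finrank ℝ E : ℝ)) * ENNReal.ofReal (R ^ (-(finrank ℝ E : ℝ)))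
      = 1 := by
    rw [← ENNReal.ofReal_mul (by positivity), ← Real.rpow_add hR, add_neg_cancel,
      Real.rpow_zero, ENNReal.ofReal_one]
  calc ∫⁻ z in ball 0 R, ‖z‖ₑ ^ (-s) ∂μ
      = ENNReal.ofReal (R ^ (finrank ℝ E : ℝ)) * ENNReal.ofReal (R ^ (-(finrank ℝ E : ℝ)))
          * ∫⁻ z in ball 0 R, ‖z‖ₑ ^ (-s) ∂μ := by rw [hinv, one_mul]
    _ = ENNReal.ofReal (R ^ ((finrank ℝ E : ℝ) - s)) * ∫⁻ z in ball 0 1, ‖z‖ₑ ^ (-s) ∂μ := by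
      rw [mul_assoc, ← h, ← mul_assoc, ← ENNReal.ofReal_mul (by positivity), ← Real.rpow_add hR,
        sub_eq_add_neg]

theorem setLIntegral_ball_enorm_rpow_neg_lt_top {s : ℝ} (hs0 : 0 ≤ s) (hs : s < finrank ℝ E) :
    ∫⁻ z in ball 0 1, ‖z‖ₑ ^ (-s) ∂μ < ∞ := by
  have hd : 1 ≤ finrank ℝ E := by exact_mod_cast hs0.trans_lt hs
  have : Nontrivial E := Module.nontrivial_of_finrank_pos (R := ℝ) hd
  have hint : IntegrableOn (fun z : E ↦ ‖z‖ ^ (-s)) (ball 0 1) μ :=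
    integrableOn_ball_of_norm_le_rpow hd hs (C := 1)
      (ae_of_all _ fun z ↦ by simp [abs_of_nonneg, Real.rpow_nonneg])
      (measurable_norm.pow_const _).aestronglyMeasurable
  refine lt_of_eq_of_lt (setLIntegral_congr_fun_ae measurableSet_ball ?_) hint.2
  filter_upwards [μ.ae_ne 0] with z hz _
  rw [Real.enorm_of_nonneg (by positivity), ← ENNReal.ofReal_rpow_of_pos (norm_pos_iff.2 hz),
    ofReal_norm]

end MeasureTheory.Measure

section LpNorms

variable {α F : Type*} [MeasurableSpace α] {μ : Measure α} [SeminormedAddCommGroup F]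

theorem lintegral_enorm_pow_eq_eLpNorm_pow (f : α → F) {n : ℕ} (hn : n ≠ 0) :
    ∫⁻ x, ‖f x‖ₑ ^ n ∂μ = eLpNorm f n μ ^ n := by
  have h := eLpNorm_nnreal_pow_eq_lintegral (μ := μ) (f := f) (p := n) (by exact_mod_cast hn)
  simp only [NNReal.coe_natCast, ENNReal.rpow_natCast, ENNReal.coe_natCast] at h
  exact h.symm

theorem lintegral_enorm_sq_eq_eLpNorm_two_sq (f : α → F) :
    ∫⁻ x, ‖f x‖ₑ ^ 2 ∂μ = eLpNorm f 2 μ ^ 2 := by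
  exact_mod_cast lintegral_enorm_pow_eq_eLpNorm_pow f two_ne_zero

theorem lintegral_enorm_sq_mul_le_eLpNorm_six {f : α → F} (hf : AEStronglyMeasurable f μ)
    {k : α → ℝ≥0∞} (hk : AEMeasurable k μ) :
    ∫⁻ x, ‖f x‖ₑ ^ 2 * k x ∂μ
      ≤ eLpNorm f 6 μ ^ 2 * (∫⁻ x, k x ^ (3 / 2 : ℝ) ∂μ) ^ (2 / 3 : ℝ) := by
  have hpq : (3 : ℝ).HolderConjugate (3 / 2) := by
    rw [Real.holderConjugate_iff]; norm_num
  have h6 : ∫⁻ x, (‖f x‖ₑ ^ 2) ^ (3 : ℝ) ∂μ = eLpNorm f 6 μ ^ 6 := by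
    have h := lintegral_enorm_pow_eq_eLpNorm_pow (μ := μ) f (n := 6) (by norm_num)
    rw [Nat.cast_ofNat] at h
    rw [← h]
    congr 1 with x
    rw [← ENNReal.rpow_natCast, ← ENNReal.rpow_natCast, ← ENNReal.rpow_mul]
    norm_num
  have h := ENNReal.lintegral_mul_le_Lp_mul_Lq μ hpq (hf.enorm.pow_const 2) hk
  rw [h6, ← ENNReal.rpow_natCast, ← ENNReal.rpow_mul] at h
  norm_num at h
  exact h

theorem eLpNorm_two_le_ofReal_sqrt_integral {f : α → F} {g : α → ℝ} (hg : Integrable g μ)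
    (hfg : ∀ x, ‖f x‖ ^ 2 ≤ g x) : eLpNorm f 2 μ ≤ ENNReal.ofReal √(∫ x, g x ∂μ) := by
  have hg0 (x : α) : 0 ≤ g x := (sq_nonneg _).trans (hfg x)
  rw [← ENNReal.pow_le_pow_left_iff two_ne_zero, ← ENNReal.ofReal_pow (Real.sqrt_nonneg _),
    Real.sq_sqrt (integral_nonneg hg0), ← lintegral_enorm_sq_eq_eLpNorm_two_sq,
    ofReal_integral_eq_lintegral_ofReal hg (ae_of_all _ hg0)]
  refine lintegral_mono fun x ↦ ?_
  rw [← ofReal_norm, ← ENNReal.ofReal_pow (norm_nonneg _)]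
  exact ENNReal.ofReal_le_ofReal (hfg x)

theorem Continuous.integrable_norm_sq_of_hasCompactSupport [TopologicalSpace α]
    [OpensMeasurableSpace α] [IsFiniteMeasureOnCompacts μ] {f : α → F} (hf : Continuous f)
    (hcs : HasCompactSupport f) : Integrable (fun x ↦ ‖f x‖ ^ 2) μ := by
  have h : HasCompactSupport (fun x ↦ ‖f x‖ ^ 2) := hcs.comp_left (g := (‖·‖ ^ 2)) (by simp)
  exact (hf.norm.pow 2).integrable_of_hasCompactSupport h

end LpNorms

section Hartree

variable {E F : Type*} [NormedAddCommGroup E] [MeasurableSpace E] (μ : Measure E)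
  [NormedAddCommGroup F]

noncomputable def hartreePotential (f : E → F) (x : E) : ℝ≥0∞ :=
  ∫⁻ y, ‖f y‖ₑ ^ 2 / ‖x - y‖ₑ ∂μ

noncomputable def coulombConst : ℝ≥0∞ :=
  (∫⁻ z in ball 0 1, ‖z‖ₑ ^ (-(3 / 2 : ℝ)) ∂μ) ^ (2 / 3 : ℝ)

theorem setLIntegral_compl_ball_enorm_sq_div_le [OpensMeasurableSpace E] (f : E → F) (x : E)
    {R : ℝ} (hR : 0 < R) :
    ∫⁻ y in (ball x R)ᶜ, ‖f y‖ₑ ^ 2 / ‖x - y‖ₑ ∂μ ≤ eLpNorm f 2 μ ^ 2 / ENNReal.ofReal R := by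
  calc ∫⁻ y in (ball x R)ᶜ, ‖f y‖ₑ ^ 2 / ‖x - y‖ₑ ∂μ
      ≤ ∫⁻ y in (ball x R)ᶜ, ‖f y‖ₑ ^ 2 * (ENNReal.ofReal R)⁻¹ ∂μ := by
        refine setLIntegral_mono' measurableSet_ball.compl fun y hy ↦ ?_
        rw [mem_compl_iff, mem_ball, not_lt, dist_eq_norm, ← norm_neg, neg_sub] at hy
        rw [← div_eq_mul_inv, ← ofReal_norm (x - y)]
        exact ENNReal.div_le_div_left (ENNReal.ofReal_le_ofReal hy) _
    _ ≤ ∫⁻ y, ‖f y‖ₑ ^ 2 * (ENNReal.ofReal R)⁻¹ ∂μ := setLIntegral_le_lintegral _ _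
    _ = eLpNorm f 2 μ ^ 2 / ENNReal.ofReal R := by
        rw [lintegral_mul_const' _ _ (by simpa using hR), lintegral_enorm_sq_eq_eLpNorm_two_sq,
          div_eq_mul_inv]

theorem ofReal_setIntegral_hartree_le (f : E → F) (s : Set E) :
    ENNReal.ofReal (∫ x in s, (∫ y, ‖f y‖ ^ 2 / ‖x - y‖ ∂μ) * ‖f x‖ ^ 2 ∂μ)
      ≤ ∫⁻ x, hartreePotential μ f x * ‖f x‖ₑ ^ 2 ∂μ := by
  have hpot (x : E) : ‖∫ y, ‖f y‖ ^ 2 / ‖x - y‖ ∂μ‖ₑ ≤ hartreePotential μ f x := by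
    refine (enorm_integral_le_lintegral_enorm _).trans (lintegral_mono fun y ↦ ?_)
    rw [Real.enorm_of_nonneg (by positivity), ← ofReal_norm, ← ofReal_norm,
      ← ENNReal.ofReal_pow (norm_nonneg _)]
    exact ENNReal.ofReal_div_le (norm_nonneg _)
  calc ENNReal.ofReal (∫ x in s, (∫ y, ‖f y‖ ^ 2 / ‖x - y‖ ∂μ) * ‖f x‖ ^ 2 ∂μ)
      ≤ ∫⁻ x in s, ‖(∫ y, ‖f y‖ ^ 2 / ‖x - y‖ ∂μ) * ‖f x‖ ^ 2‖ₑ ∂μ :=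
        (Real.ofReal_le_enorm _).trans (enorm_integral_le_lintegral_enorm _)
    _ ≤ ∫⁻ x, ‖(∫ y, ‖f y‖ ^ 2 / ‖x - y‖ ∂μ) * ‖f x‖ ^ 2‖ₑ ∂μ := setLIntegral_le_lintegral _ _
    _ ≤ ∫⁻ x, hartreePotential μ f x * ‖f x‖ₑ ^ 2 ∂μ := by
        refine lintegral_mono fun x ↦ ?_
        rw [enorm_mul, enorm_pow, enorm_norm]
        exact mul_le_mul_left (hpot x) _

variable [NormedSpace ℝ E] [FiniteDimensional ℝ E] [BorelSpace E] [μ.IsAddHaarMeasure]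

theorem coulombConst_lt_top (hE : finrank ℝ E = 3) : coulombConst μ < ∞ :=
  ENNReal.rpow_lt_top_of_nonneg (by norm_num) (Measure.setLIntegral_ball_enorm_rpow_neg_lt_top μ
    (by norm_num) (by rw [hE]; norm_num)).ne

theorem setLIntegral_ball_enorm_sq_div_le (hE : finrank ℝ E = 3) {f : E → F}
    (hf : AEStronglyMeasurable f μ) (x : E) {R : ℝ} (hR : 0 < R) :
    ∫⁻ y in ball x R, ‖f y‖ₑ ^ 2 / ‖x - y‖ₑ ∂μ
      ≤ eLpNorm f 6 μ ^ 2 * (ENNReal.ofReal R * coulombConst μ) := by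
  have hkernel : ∫⁻ y in ball x R, (‖x - y‖ₑ⁻¹) ^ (3 / 2 : ℝ) ∂μ
      = ∫⁻ z in ball 0 R, ‖z‖ₑ ^ (-(3 / 2 : ℝ)) ∂μ := by
    rw [← lintegral_indicator measurableSet_ball, ← lintegral_indicator measurableSet_ball,
      ← lintegral_add_left_eq_self _ x]
    congr 1 with z
    have hmem : x + z ∈ ball x R ↔ z ∈ ball 0 R := by simp
    by_cases hz : z ∈ ball (0 : E) R
    · rw [indicator_of_mem (hmem.2 hz), indicator_of_mem hz, sub_add_cancel_left, enorm_neg,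
        ENNReal.inv_rpow, ENNReal.rpow_neg]
    · rw [indicator_of_notMem (mt hmem.1 hz), indicator_of_notMem hz]
  calc ∫⁻ y in ball x R, ‖f y‖ₑ ^ 2 / ‖x - y‖ₑ ∂μ
      = ∫⁻ y in ball x R, ‖f y‖ₑ ^ 2 * ‖x - y‖ₑ⁻¹ ∂μ := rfl
    _ ≤ eLpNorm f 6 (μ.restrict (ball x R)) ^ 2
          * (∫⁻ y in ball x R, (‖x - y‖ₑ⁻¹) ^ (3 / 2 : ℝ) ∂μ) ^ (2 / 3 : ℝ) :=
      lintegral_enorm_sq_mul_le_eLpNorm_six hf.restrict (by fun_prop)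
    _ ≤ eLpNorm f 6 μ ^ 2 * (ENNReal.ofReal R * coulombConst μ) := by
      rw [coulombConst, hkernel, Measure.setLIntegral_ball_enorm_rpow_neg μ hR, hE,
        ENNReal.mul_rpow_of_nonneg _ _ (by norm_num), ENNReal.ofReal_rpow_of_pos (by positivity),
        ← Real.rpow_mul hR.le, show ((3 : ℕ) - 3 / 2 : ℝ) * (2 / 3) = 1 by norm_num,
        Real.rpow_one]
      gcongr
      exact Measure.restrict_le_self

theorem hartreePotential_le_of_pos (hE : finrank ℝ E = 3) {f : E → F}
    (hf : AEStronglyMeasurable f μ) (x : E) {R : ℝ} (hR : 0 < R) :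
    hartreePotential μ f x
      ≤ eLpNorm f 6 μ ^ 2 * (ENNReal.ofReal R * coulombConst μ)
          + eLpNorm f 2 μ ^ 2 / ENNReal.ofReal R := by
  rw [hartreePotential, ← lintegral_add_compl _ measurableSet_ball]
  exact add_le_add (setLIntegral_ball_enorm_sq_div_le μ hE hf x hR)
    (setLIntegral_compl_ball_enorm_sq_div_le μ f x hR)

theorem hartreePotential_le (hE : finrank ℝ E = 3) {f : E → F}
    (hf : AEStronglyMeasurable f μ) (x : E) :
    hartreePotential μ f x ≤ (coulombConst μ + 1) * eLpNorm f 2 μ * eLpNorm f 6 μ := by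
  by_cases hzero : eLpNorm f 2 μ = 0 ∨ eLpNorm f 6 μ = 0
  · have hf0 : f =ᵐ[μ] 0 := by
      rcases hzero with h | h <;> exact (eLpNorm_eq_zero_iff hf (by norm_num)).1 h
    calc hartreePotential μ f x = ∫⁻ _, 0 ∂μ :=
          lintegral_congr_ae (hf0.mono fun y hy ↦ by simp [hy])
      _ ≤ _ := by rw [lintegral_zero]; exact zero_le
  rw [not_or] at hzero
  by_cases htop : eLpNorm f 2 μ = ∞ ∨ eLpNorm f 6 μ = ∞
  · rcases htop with h | h <;> simp [h, hzero.1, hzero.2]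
  rw [not_or] at htop
  lift eLpNorm f 2 μ to ℝ≥0 using htop.1 with a ha
  lift eLpNorm f 6 μ to ℝ≥0 using htop.2 with b hb
  have ha0 : a ≠ 0 := by exact_mod_cast hzero.1
  have hb0 : b ≠ 0 := by exact_mod_cast hzero.2
  have hnear : b ^ 2 * (a / b) = a * b := by field_simp
  have hfar : a ^ 2 / (a / b) = a * b := by field_simp
  have hR : (0 : ℝ) < (a / b : ℝ≥0) := by positivity
  refine (hartreePotential_le_of_pos μ hE hf x hR).trans_eq ?_
  rw [ENNReal.ofReal_coe_nnreal, ← hb, ← ha, ← ENNReal.coe_pow, ← ENNReal.coe_pow,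
    ← ENNReal.coe_div (by positivity), ← mul_assoc, ← ENNReal.coe_mul, hnear, hfar]
  push_cast
  ring

theorem lintegral_hartreePotential_mul_le (hE : finrank ℝ E = 3) {f : E → F}
    (hf : AEStronglyMeasurable f μ) :
    ∫⁻ x, hartreePotential μ f x * ‖f x‖ₑ ^ 2 ∂μ
      ≤ (coulombConst μ + 1) * eLpNorm f 2 μ ^ 3 * eLpNorm f 6 μ := by
  calc ∫⁻ x, hartreePotential μ f x * ‖f x‖ₑ ^ 2 ∂μ
      ≤ ∫⁻ x, (coulombConst μ + 1) * eLpNorm f 2 μ * eLpNorm f 6 μ * ‖f x‖ₑ ^ 2 ∂μ :=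
        lintegral_mono fun x ↦ by gcongr; exact hartreePotential_le μ hE hf x
    _ = (coulombConst μ + 1) * eLpNorm f 2 μ ^ 3 * eLpNorm f 6 μ := by
        rw [lintegral_const_mul'' _ (hf.enorm.pow_const 2), lintegral_enorm_sq_eq_eLpNorm_two_sq]
        ring

end Hartree

section Gradient

variable {H ι : Type*} [NormedAddCommGroup H] [NormedSpace ℝ H] [Fintype ι]

theorem ContinuousLinearMap.opNorm_sq_le_sum_proj_comp {β : ι → Type*}
    [∀ i, NormedAddCommGroup (β i)] [∀ i, NormedSpace ℝ (β i)] (L : H →L[ℝ] PiLp 2 β) :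
    ‖L‖ ^ 2 ≤ ∑ i, ‖PiLp.proj 2 β i ∘L L‖ ^ 2 := by
  refine (Real.le_sqrt (norm_nonneg _) (by positivity)).1 <|
    L.opNorm_le_bound (by positivity) fun v ↦ ?_
  rw [PiLp.norm_eq_of_L2, ← Real.sqrt_sq (norm_nonneg v), ← Real.sqrt_mul (by positivity),
    Finset.sum_mul]
  gcongr with i
  rw [← mul_pow]
  gcongr
  exact (PiLp.proj 2 β i ∘L L).le_opNorm v

theorem norm_fderiv_sq_le_sum_norm_fderiv_apply_sq {𝕜 : Type*} [RCLike 𝕜]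
    {Ψ : H → EuclideanSpace 𝕜 ι} {x : H} (hΨ : DifferentiableAt ℝ Ψ x) :
    ‖fderiv ℝ Ψ x‖ ^ 2 ≤ ∑ i, ‖fderiv ℝ (fun z ↦ Ψ z i) x‖ ^ 2 := by
  have hcomp (i : ι) : fderiv ℝ (fun z ↦ Ψ z i) x = PiLp.proj 2 _ i ∘L fderiv ℝ Ψ x := by
    have h : HasFDerivAt (fun z ↦ Ψ z i) (PiLp.proj 2 _ i ∘L fderiv ℝ Ψ x) x :=
      (PiLp.hasFDerivAt_apply (𝕜 := ℝ) 2 (Ψ x) i).comp x hΨ.hasFDerivAt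
    exact h.fderiv
  simpa only [hcomp] using (fderiv ℝ Ψ x).opNorm_sq_le_sum_proj_comp

theorem eLpNorm_fderiv_two_le_ofReal_sqrt [MeasurableSpace H] [OpensMeasurableSpace H]
    (μ : Measure H) [IsFiniteMeasureOnCompacts μ] {𝕜 : Type*} [RCLike 𝕜]
    {Ψ : H → EuclideanSpace 𝕜 ι} (hΨ : ContDiff ℝ 1 Ψ) (hcs : HasCompactSupport Ψ) :
    eLpNorm (fderiv ℝ Ψ) 2 μ ≤ ENNReal.ofReal √(∑ i, ∫ x, ‖fderiv ℝ (fun z ↦ Ψ z i) x‖ ^ 2 ∂μ) := by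
  have hint (i : ι) : Integrable (fun x ↦ ‖fderiv ℝ (fun z ↦ Ψ z i) x‖ ^ 2) μ := by
    have hcsi : HasCompactSupport (fun z ↦ Ψ z i) :=
      hcs.comp_left (g := fun v : EuclideanSpace 𝕜 ι ↦ v i) (by simp)
    have hcont : Continuous (fderiv ℝ (fun z ↦ Ψ z i)) :=
      ((contDiff_piLp 2).1 hΨ i).continuous_fderiv one_ne_zero
    exact hcont.integrable_norm_sq_of_hasCompactSupport (hcsi.fderiv ℝ)
  rw [← integral_finsetSum _ fun i _ ↦ hint i]
  refine eLpNorm_two_le_ofReal_sqrt_integral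
    (g := fun x ↦ ∑ i, ‖fderiv ℝ (fun z ↦ Ψ z i) x‖ ^ 2) ?_ fun x ↦ ?_
  · exact integrable_finsetSum _ fun i _ ↦ hint i
  · exact norm_fderiv_sq_le_sum_norm_fderiv_apply_sq (hΨ.differentiable one_ne_zero x)

theorem eLpNorm_six_le_eLpNorm_fderiv_two {E F : Type*} [NormedAddCommGroup E]
    [NormedSpace ℝ E] [FiniteDimensional ℝ E] [MeasurableSpace E] [BorelSpace E]
    (μ : Measure E) [μ.IsAddHaarMeasure] [NormedAddCommGroup F] [NormedSpace ℝ F]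
    [FiniteDimensional ℝ F] (hE : finrank ℝ E = 3) {u : E → F} (hu : ContDiff ℝ 1 u)
    (hcs : HasCompactSupport u) :
    eLpNorm u 6 μ ≤ SNormLESNormFDerivOfEqConst F μ 2 * eLpNorm (fderiv ℝ u) 2 μ := by
  have h := eLpNorm_le_eLpNorm_fderiv_of_eq μ hu hcs (p := 2) (p' := 6) (by norm_num)
    (by rw [hE]; norm_num) (by rw [hE]; norm_num)
  exact_mod_cast h

end Gradient

theorem hartree_energy_nonneg_and_bound_general
    (Ω : Set (EuclideanSpace ℝ (Fin 3)))
    (N : ℕ) :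
    ∃ C > (0 : ℝ), ∀ Ψ : EuclideanSpace ℝ (Fin 3) → EuclideanSpace ℂ (Fin N),
      ContDiff ℝ 1 Ψ → HasCompactSupport Ψ → tsupport Ψ ⊆ Ω →
      0 ≤ ∫ x in Ω,
            (∫ y, (∑ j, ‖Ψ y j‖ ^ 2) / ‖x - y‖ ∂volume) * (∑ j, ‖Ψ x j‖ ^ 2) ∂volume
      ∧ ∫ x in Ω,
            (∫ y, (∑ j, ‖Ψ y j‖ ^ 2) / ‖x - y‖ ∂volume) * (∑ j, ‖Ψ x j‖ ^ 2) ∂volume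
          ≤ C * Real.sqrt (∫ x, ∑ j, ‖Ψ x j‖ ^ 2 ∂volume) ^ 3
              * Real.sqrt (∑ j, ∫ x, ‖fderiv ℝ (fun z => Ψ z j) x‖ ^ 2 ∂volume) := by
  have hE : finrank ℝ (EuclideanSpace ℝ (Fin 3)) = 3 := finrank_euclideanSpace_fin
  lift coulombConst (volume : Measure (EuclideanSpace ℝ (Fin 3))) + 1 to ℝ≥0
    using (ENNReal.add_lt_top.2 ⟨coulombConst_lt_top volume hE, ENNReal.one_lt_top⟩).ne with K hK
  set cS := SNormLESNormFDerivOfEqConst (EuclideanSpace ℂ (Fin N))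
    (volume : Measure (EuclideanSpace ℝ (Fin 3))) 2
  refine ⟨K * cS + 1, by positivity, fun Ψ hΨ hcs _ ↦ ?_⟩
  simp_rw [← EuclideanSpace.norm_sq_eq]
  refine ⟨integral_nonneg fun x ↦ by positivity, ?_⟩
  rw [← ENNReal.ofReal_le_ofReal_iff (by positivity)]
  calc ENNReal.ofReal (∫ x in Ω, (∫ y, ‖Ψ y‖ ^ 2 / ‖x - y‖) * ‖Ψ x‖ ^ 2)
      ≤ K * eLpNorm Ψ 2 volume ^ 3 * eLpNorm Ψ 6 volume := by
        rw [hK]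
        exact (ofReal_setIntegral_hartree_le volume Ψ Ω).trans
          (lintegral_hartreePotential_mul_le volume hE hΨ.continuous.aestronglyMeasurable)
    _ ≤ K * ENNReal.ofReal √(∫ x, ‖Ψ x‖ ^ 2) ^ 3
          * (cS * ENNReal.ofReal √(∑ j, ∫ x, ‖fderiv ℝ (fun z ↦ Ψ z j) x‖ ^ 2)) := by
        gcongr
        · exact eLpNorm_two_le_ofReal_sqrt_integral
            (hΨ.continuous.integrable_norm_sq_of_hasCompactSupport hcs) fun _ ↦ le_rfl
        · exact (eLpNorm_six_le_eLpNorm_fderiv_two volume hE hΨ hcs).trans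
            (by gcongr; exact eLpNorm_fderiv_two_le_ofReal_sqrt volume hΨ hcs)
    _ = ENNReal.ofReal (K * cS * √(∫ x, ‖Ψ x‖ ^ 2) ^ 3
          * √(∑ j, ∫ x, ‖fderiv ℝ (fun z ↦ Ψ z j) x‖ ^ 2)) := by
        rw [ENNReal.ofReal_mul (by positivity), ENNReal.ofReal_mul (by positivity),
          ENNReal.ofReal_mul (by positivity), ENNReal.ofReal_pow (Real.sqrt_nonneg _),
          ENNReal.ofReal_coe_nnreal, ENNReal.ofReal_coe_nnreal]
        ring
    _ ≤ _ := ENNReal.ofReal_le_ofReal (by gcongr; linarith)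

/-- For a bounded open set `Ω ⊆ ℝ³` there is `C > 0`, depending only on `N`, such that for
every `C¹` function `Ψ : ℝ³ → ℂᴺ` with compact support contained in `Ω`:
`0 ≤ ⟨V_H(Ψ)Ψ, Ψ⟩_{L²(Ω)} ≤ C ‖Ψ‖³_{L²} ‖∇Ψ‖_{L²}`, where
`⟨V_H(Ψ)Ψ, Ψ⟩_{L²(Ω)} = ∫_Ω V_H(Ψ)(x) ρ(Ψ)(x) dx`,
`V_H(Ψ)(x) = ∫_{ℝ³} ρ(Ψ)(y)/‖x−y‖ dy` and `ρ(Ψ) = Σⱼ |ψⱼ|²`. -/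
theorem hartree_energy_nonneg_and_bound
    (Ω : Set (EuclideanSpace ℝ (Fin 3)))
    (hΩo : IsOpen Ω) (hΩb : Bornology.IsBounded Ω)
    (N : ℕ) (hN : 1 ≤ N) :
    ∃ C > (0 : ℝ), ∀ Ψ : EuclideanSpace ℝ (Fin 3) → EuclideanSpace ℂ (Fin N),
      ContDiff ℝ 1 Ψ → HasCompactSupport Ψ → tsupport Ψ ⊆ Ω →
      0 ≤ ∫ x in Ω,
            (∫ y, (∑ j, ‖Ψ y j‖ ^ 2) / ‖x - y‖ ∂volume) * (∑ j, ‖Ψ x j‖ ^ 2) ∂volume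
      ∧ ∫ x in Ω,
            (∫ y, (∑ j, ‖Ψ y j‖ ^ 2) / ‖x - y‖ ∂volume) * (∑ j, ‖Ψ x j‖ ^ 2) ∂volume
          ≤ C * Real.sqrt (∫ x, ∑ j, ‖Ψ x j‖ ^ 2 ∂volume) ^ 3
              * Real.sqrt (∑ j, ∫ x, ‖fderiv ℝ (fun z => Ψ z j) x‖ ^ 2 ∂volume) :=
  hartree_energy_nonneg_and_bound_general Ω N
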